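/- Pointwise sparse domination of sliced shifts (key proposition): let m ≥ 1, P₀ a dyadic cube, and α a Carleson sequence on 𝒟(P₀). For nonnegative integrable f₁,…,f_k on P₀ there exists a (1/2)-sparse collection 𝒮 ⊆ 𝒟(P₀) such that 𝒜^{m;0}_{P₀,α} f⃗(x) ≤ C₁ ‖α‖_{Car(P₀)} Σ_{Q ∈ 𝒮} (∏_{i=1}^k ⟨f_i⟩_Q) 1_Q(x) for all x ∈ P₀, where C₁ depends only on k and d (one may take C₁ = 2^{2+k(6+d(2k−1))}), and in particular is independent of m. -/

import Mathlib

open MeasureTheory ENNReal Set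
noncomputable section

/-- A dyadic cube in `ℝ^d`: generation `gen` (side length `2^{-gen}`) and
position `pos` (lower-left corner `pos * 2^{-gen}`). -/
structure DyadicCube (d : ℕ) where
  gen : ℤ
  pos : Fin d → ℤ

namespace DyadicCube
variable {d : ℕ}

/-- The half-open cube represented by `Q`. -/
def toSet (Q : DyadicCube d) : Set (Fin d → ℝ) :=
  {x | ∀ i, (Q.pos i : ℝ) * (2 : ℝ) ^ (-Q.gen) ≤ x i ∧
        x i < ((Q.pos i : ℝ) + 1) * (2 : ℝ) ^ (-Q.gen)}

/-- Lebesgue measure of the cube. -/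
def vol (Q : DyadicCube d) : ℝ≥0∞ := volume Q.toSet

/-- The dyadic parent of a cube. -/
def parent (Q : DyadicCube d) : DyadicCube d :=
  ⟨Q.gen - 1, fun i => Int.fdiv (Q.pos i) 2⟩

/-- The `m`-th dyadic ancestor of a cube. -/
def ancestor (m : ℕ) (Q : DyadicCube d) : DyadicCube d := parent^[m] Q

/-- `Q.In P`: `Q` is a dyadic subcube of `P`. -/
def In (Q P : DyadicCube d) : Prop := P.gen ≤ Q.gen ∧ Q.toSet ⊆ P.toSet

/-- Average of a nonnegative (extended-real-valued) function over a cube. -/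
def avg (Q : DyadicCube d) (f : (Fin d → ℝ) → ℝ≥0∞) : ℝ≥0∞ :=
  (∫⁻ x in Q.toSet, f x) / Q.vol

/-- Average of a real-valued function over a cube. -/
def avgR (Q : DyadicCube d) (f : (Fin d → ℝ) → ℝ) : ℝ :=
  (∫ x in Q.toSet, f x) / (Q.vol).toReal

/-- `α` is a Carleson sequence on `𝒟(P₀)` with constant `C`. -/
def Carleson (P₀ : DyadicCube d) (α : DyadicCube d → ℝ≥0∞) (C : ℝ≥0∞) : Prop :=
  ∀ P : DyadicCube d, P.In P₀ →
    ∑' Q : {Q : DyadicCube d // Q.In P}, α Q.1 * Q.1.vol ≤ C * P.vol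

/-- Real-valued version of the Carleson condition. -/
def CarlesonR (P₀ : DyadicCube d) (α : DyadicCube d → ℝ) (C : ℝ) : Prop :=
  ∀ P : DyadicCube d, P.In P₀ →
    ∑' Q : {Q : DyadicCube d // Q.In P}, α Q.1 * (Q.1.vol).toReal ≤ C * (P.vol).toReal

/-- `η`-sparse collection of dyadic cubes. -/
def Sparse (η : ℝ≥0∞) (S : Set (DyadicCube d)) : Prop :=
  ∃ E : DyadicCube d → Set (Fin d → ℝ),
    (∀ Q ∈ S, MeasurableSet (E Q) ∧ E Q ⊆ Q.toSet ∧ η * Q.vol ≤ volume (E Q)) ∧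
    S.Pairwise fun Q Q' => Disjoint (E Q) (E Q')

/-- The `k`-linear positive dyadic shift of complexity `m` on `𝒟(P₀)`. -/
def shift (P₀ : DyadicCube d) (α : DyadicCube d → ℝ≥0∞) (m : ℕ) {k : ℕ}
    (f : Fin k → (Fin d → ℝ) → ℝ≥0∞) (x : Fin d → ℝ) : ℝ≥0∞ :=
  ∑' Q : {Q : DyadicCube d // Q.In P₀ ∧ P₀.gen + m ≤ Q.gen},
    α Q.1 * (∏ i, (ancestor m Q.1).avg (f i)) * Q.1.toSet.indicator 1 x

/-- The sliced shift `𝒜^{m;0}_{P,α}`, summing only over generations `jm`, `j ≥ 1`,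
relative to `P`. -/
def slicedShift (P : DyadicCube d) (α : DyadicCube d → ℝ≥0∞) (m : ℕ) {k : ℕ}
    (f : Fin k → (Fin d → ℝ) → ℝ≥0∞) (x : Fin d → ℝ) : ℝ≥0∞ :=
  ∑' Q : {Q : DyadicCube d // Q.In P ∧ ∃ j : ℕ, 1 ≤ j ∧ Q.gen = P.gen + j * m},
    α Q.1 * (∏ i, (ancestor m Q.1).avg (f i)) * Q.1.toSet.indicator 1 x

/-- Real-valued `k`-linear positive dyadic shift of complexity `m`. -/
def shiftR (P₀ : DyadicCube d) (α : DyadicCube d → ℝ) (m : ℕ) {k : ℕ}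
    (f : Fin k → (Fin d → ℝ) → ℝ) (x : Fin d → ℝ) : ℝ :=
  ∑' Q : {Q : DyadicCube d // Q.In P₀ ∧ P₀.gen + m ≤ Q.gen},
    α Q.1 * (∏ i, (ancestor m Q.1).avgR (f i)) * Q.1.toSet.indicator 1 x

/-- Real-valued sliced shift `𝒜^{m;0}_{P,α}`. -/
def slicedShiftR (P : DyadicCube d) (α : DyadicCube d → ℝ) (m : ℕ) {k : ℕ}
    (f : Fin k → (Fin d → ℝ) → ℝ) (x : Fin d → ℝ) : ℝ :=
  ∑' Q : {Q : DyadicCube d // Q.In P ∧ ∃ j : ℕ, 1 ≤ j ∧ Q.gen = P.gen + j * m},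
    α Q.1 * (∏ i, (ancestor m Q.1).avgR (f i)) * Q.1.toSet.indicator 1 x

/-- The positive sparse operator `𝒜⁰_𝒮`. -/
def sparseOp (S : Set (DyadicCube d)) {k : ℕ}
    (f : Fin k → (Fin d → ℝ) → ℝ≥0∞) (x : Fin d → ℝ) : ℝ≥0∞ :=
  ∑' Q : S, (∏ i, (Q : DyadicCube d).avg (f i)) * (Q : DyadicCube d).toSet.indicator 1 x

end DyadicCube

open DyadicCube

/-!
Stopping time along the slices. The cubes of generations `P₀.gen + j m` containing a point `x`
form a chain; going down the chain, a cube becomes a stopping cube when the average of some `f i`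
exceeds `4k` times its average over the current stopping cube, or when the `α`-mass collected
since that stopping cube exceeds `4A`. Between two stops the averages are at most `(4k)^k` times
those over the stopping cube and the collected `α`-mass is at most `5A`, so the sliced shift at
`x` is at most `5 (4k)^k A` times the sparse operator of the stopping cubes. The stopping
children of a stopping cube `Q` fill at most half of `Q`: at most `|Q|/(4k)` for each average, by
the weak-type `(1,1)` bound, and at most `|Q|/4` by the Carleson condition. Hence the parts of the
stopping cubes not covered by deeper stopping cubes are disjoint and fill half of each cube.
-/

lemma ENNReal.div_mul_le_self (a b : ℝ≥0∞) : a / b * b ≤ a := by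
  rw [div_eq_mul_inv, mul_assoc]
  exact mul_le_of_le_one_right' (ENNReal.inv_mul_le_one b)

lemma MeasureTheory.mul_tsum_measure_le_of_mul_avg_lt {X ι : Type*} [MeasurableSpace X]
    [Countable ι] {μ : Measure X} {f : X → ℝ≥0∞} {s : Set X} {t : ι → Set X} {c : ℝ≥0∞}
    (hs : μ s ≠ ⊤) (ht : ∀ j, MeasurableSet (t j))
    (hdisj : Pairwise (Function.onFun Disjoint t)) (hts : ∀ j, t j ⊆ s)
    (hlt : ∀ j, c * ((∫⁻ x in s, f x ∂μ) / μ s) < (∫⁻ x in t j, f x ∂μ) / μ (t j)) :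
    c * ∑' j, μ (t j) ≤ μ s := by
  rcases isEmpty_or_nonempty ι with hι | ⟨⟨j₀⟩⟩
  · simp
  rcases eq_or_ne c 0 with rfl | hc
  · simp
  set a := (∫⁻ x in s, f x ∂μ) / μ s
  have ha0 : a ≠ 0 := by
    intro ha
    have hs0 : ∫⁻ x in s, f x ∂μ = 0 := (ENNReal.div_eq_zero_iff.mp ha).resolve_right hs
    have ht0 : ∫⁻ x in t j₀, f x ∂μ = 0 := le_zero_iff.mp (hs0 ▸ lintegral_mono_set (hts j₀))
    simpa [ha, ht0] using hlt j₀
  have hatop : a ≠ ⊤ := fun ha => not_top_lt (ENNReal.mul_top hc ▸ ha ▸ hlt j₀)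
  have hμs : μ s ≠ 0 := fun h => ha0 (by simp [a, Measure.restrict_eq_zero.mpr h])
  refine (ENNReal.mul_le_mul_iff_right ha0 hatop).mp ?_
  calc a * (c * ∑' j, μ (t j)) = ∑' j, c * a * μ (t j) := by
        rw [ENNReal.tsum_mul_left]; ring
    _ ≤ ∑' j, (∫⁻ x in t j, f x ∂μ) / μ (t j) * μ (t j) :=
        ENNReal.tsum_le_tsum fun j => by gcongr; exact (hlt j).le
    _ ≤ ∑' j, ∫⁻ x in t j, f x ∂μ := ENNReal.tsum_le_tsum fun j => ENNReal.div_mul_le_self _ _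
    _ = ∫⁻ x in ⋃ j, t j, f x ∂μ := (lintegral_iUnion ht hdisj _).symm
    _ ≤ ∫⁻ x in s, f x ∂μ := lintegral_mono_set (iUnion_subset hts)
    _ = a * μ s := (ENNReal.div_mul_cancel hμs hs).symm

namespace DyadicCube

variable {d : ℕ}

lemma toSet_eq_pi (Q : DyadicCube d) :
    Q.toSet = univ.pi fun i =>
      Ico ((Q.pos i : ℝ) * 2 ^ (-Q.gen)) ((Q.pos i + 1) * 2 ^ (-Q.gen)) := by
  ext x
  simp [toSet]

lemma measurableSet_toSet (Q : DyadicCube d) : MeasurableSet Q.toSet := by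
  rw [toSet_eq_pi]
  exact .univ_pi fun _ => measurableSet_Ico

lemma vol_eq (Q : DyadicCube d) : Q.vol = ENNReal.ofReal (2 ^ (-Q.gen)) ^ d := by
  simp only [vol, toSet_eq_pi, volume_pi_pi, Real.volume_Ico]
  ring_nf
  simp

lemma vol_ne_zero (Q : DyadicCube d) : Q.vol ≠ 0 := by
  rw [vol_eq]
  exact pow_ne_zero _ (ENNReal.ofReal_pos.mpr (zpow_pos two_pos _)).ne'

lemma vol_ne_top (Q : DyadicCube d) : Q.vol ≠ ⊤ := by
  rw [vol_eq]
  exact pow_ne_top ENNReal.ofReal_ne_top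

instance : Countable (DyadicCube d) :=
  Function.Injective.countable (f := fun Q : DyadicCube d => (Q.gen, Q.pos))
    fun ⟨_, _⟩ ⟨_, _⟩ h => by cases h; rfl

lemma mem_toSet_iff {Q : DyadicCube d} {x : Fin d → ℝ} :
    x ∈ Q.toSet ↔ ∀ i, ⌊x i * 2 ^ Q.gen⌋ = Q.pos i := by
  have hw : (0 : ℝ) < 2 ^ Q.gen := zpow_pos two_pos _
  simp only [toSet, mem_ofPred_eq, Int.floor_eq_iff, zpow_neg, ← div_eq_mul_inv,
    div_le_iff₀ hw, lt_div_iff₀ hw]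

def cubeAt (g : ℤ) (x : Fin d → ℝ) : DyadicCube d := ⟨g, fun i => ⌊x i * 2 ^ g⌋⟩

lemma mem_cubeAt (g : ℤ) (x : Fin d → ℝ) : x ∈ (cubeAt g x).toSet :=
  mem_toSet_iff.mpr fun _ => rfl

lemma eq_cubeAt_of_mem {Q : DyadicCube d} {x : Fin d → ℝ} (hx : x ∈ Q.toSet) :
    Q = cubeAt Q.gen x := by
  obtain ⟨g, p⟩ := Q
  simp only [cubeAt, mk.injEq, true_and]
  exact funext fun i => (mem_toSet_iff.mp hx i).symm

lemma eq_of_gen_eq {P Q : DyadicCube d} (hg : P.gen = Q.gen) {x : Fin d → ℝ}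
    (hP : x ∈ P.toSet) (hQ : x ∈ Q.toSet) : P = Q := by
  rw [eq_cubeAt_of_mem hP, eq_cubeAt_of_mem hQ, hg]

lemma subset_parent (Q : DyadicCube d) : Q.toSet ⊆ Q.parent.toSet := by
  intro x hx
  refine mem_toSet_iff.mpr fun i => ?_
  have h2 : x i * 2 ^ (Q.gen - 1) = x i * 2 ^ Q.gen / (2 : ℕ) := by
    rw [zpow_sub₀ two_ne_zero, zpow_one]; push_cast; ring
  change ⌊x i * 2 ^ (Q.gen - 1)⌋ = (Q.pos i).fdiv 2
  rw [Int.fdiv_eq_ediv_of_nonneg _ zero_le_two, h2, Int.floor_div_natCast,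
    mem_toSet_iff.mp hx i]
  rfl

lemma ancestor_succ (n : ℕ) (Q : DyadicCube d) :
    ancestor (n + 1) Q = (ancestor n Q).parent :=
  Function.iterate_succ_apply' _ _ _

lemma ancestor_gen (n : ℕ) (Q : DyadicCube d) : (ancestor n Q).gen = Q.gen - n := by
  induction n with
  | zero => simp [ancestor]
  | succ n ih => rw [ancestor_succ, parent, ih]; push_cast; ring

lemma subset_ancestor (n : ℕ) (Q : DyadicCube d) : Q.toSet ⊆ (ancestor n Q).toSet := by
  induction n with
  | zero => exact subset_rfl
  | succ n ih => exact ih.trans (ancestor_succ n Q ▸ subset_parent _)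

lemma ancestor_cubeAt (n : ℕ) (g : ℤ) (x : Fin d → ℝ) :
    ancestor n (cubeAt g x) = cubeAt (g - n) x := by
  rw [eq_cubeAt_of_mem (subset_ancestor n _ (mem_cubeAt g x)), ancestor_gen]
  rfl

lemma cubeAt_subset {g g' : ℤ} (h : g ≤ g') (x : Fin d → ℝ) :
    (cubeAt g' x).toSet ⊆ (cubeAt g x).toSet := by
  obtain ⟨n, rfl⟩ : ∃ n : ℕ, g = g' - n := ⟨(g' - g).toNat, by omega⟩
  rw [← ancestor_cubeAt]
  exact subset_ancestor n _

lemma In.refl (Q : DyadicCube d) : Q.In Q := ⟨le_rfl, subset_rfl⟩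

section Slices

variable (P₀ : DyadicCube d) (m : ℕ)

/-- The cube of the `j`-th slice `𝒟_{jm}(P₀)` containing `x`. -/
def sliceCube (x : Fin d → ℝ) (j : ℕ) : DyadicCube d := cubeAt (P₀.gen + j * m) x

variable {P₀ m} {x y : Fin d → ℝ} {i j : ℕ}

lemma sliceCube_gen : (sliceCube P₀ m x j).gen = P₀.gen + j * m := rfl

lemma mem_sliceCube : x ∈ (sliceCube P₀ m x j).toSet := mem_cubeAt _ x

lemma eq_sliceCube {Q : DyadicCube d} (hQ : Q.gen = P₀.gen + j * m) (hx : x ∈ Q.toSet) :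
    Q = sliceCube P₀ m x j :=
  eq_of_gen_eq hQ hx mem_sliceCube

lemma sliceCube_zero (hx : x ∈ P₀.toSet) : sliceCube P₀ m x 0 = P₀ :=
  (eq_sliceCube (by simp) hx).symm

lemma sliceCube_subset (h : i ≤ j) :
    (sliceCube P₀ m x j).toSet ⊆ (sliceCube P₀ m x i).toSet :=
  cubeAt_subset (by gcongr) x

lemma sliceCube_in_sliceCube (h : i ≤ j) :
    (sliceCube P₀ m x j).In (sliceCube P₀ m x i) :=
  ⟨by simp only [sliceCube_gen]; gcongr, sliceCube_subset h⟩

lemma sliceCube_in (hx : x ∈ P₀.toSet) : (sliceCube P₀ m x j).In P₀ := by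
  have h := sliceCube_in_sliceCube (P₀ := P₀) (m := m) (x := x) j.zero_le
  rwa [sliceCube_zero hx] at h

lemma ancestor_sliceCube : ancestor m (sliceCube P₀ m x (j + 1)) = sliceCube P₀ m x j := by
  rw [sliceCube, ancestor_cubeAt, sliceCube]
  push_cast
  ring_nf

lemma sliceCube_injective (hm : 0 < m) : Function.Injective (sliceCube P₀ m x) := by
  intro i j h
  have h' : (i : ℤ) * m = j * m := by
    have := congrArg gen h
    simp only [sliceCube_gen] at this
    linarith
  exact_mod_cast mul_right_cancel₀ (by positivity : (m : ℤ) ≠ 0) h'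

lemma sliceCube_eq_of_mem (hy : y ∈ (sliceCube P₀ m x j).toSet) (h : i ≤ j) :
    sliceCube P₀ m y i = sliceCube P₀ m x i :=
  (eq_sliceCube sliceCube_gen (sliceCube_subset h hy)).symm

end Slices

section Carleson

variable {P₀ Q : DyadicCube d} {α : DyadicCube d → ℝ≥0∞} {A : ℝ≥0∞}

lemma In.trans {R : DyadicCube d} (hR : R.In Q) (hQ : Q.In P₀) : R.In P₀ :=
  ⟨hQ.1.trans hR.1, hR.2.trans hQ.2⟩

lemma Carleson.apply_le (hα : Carleson P₀ α A) (hQ : Q.In P₀) : α Q ≤ A := by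
  have h : α Q * Q.vol ≤ A * Q.vol :=
    (ENNReal.le_tsum (⟨Q, In.refl Q⟩ : {R : DyadicCube d // R.In Q})).trans (hα Q hQ)
  exact (ENNReal.mul_le_mul_iff_left Q.vol_ne_zero Q.vol_ne_top).mp h

lemma Carleson.mul_tsum_vol_le {ι : Type*} [Countable ι] (hα : Carleson P₀ α A)
    (hQ : Q.In P₀) {c : ℝ≥0∞} {t : ι → DyadicCube d}
    (hdisj : Pairwise (Function.onFun Disjoint fun j => (t j).toSet))
    (hmass : ∀ j, ∃ F : Finset (DyadicCube d),
      (∀ R ∈ F, R.In Q ∧ (t j).toSet ⊆ R.toSet) ∧ c * A < ∑ R ∈ F, α R) :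
    c * ∑' j, (t j).vol ≤ Q.vol := by
  classical
  choose F hF hlt using hmass
  rcases isEmpty_or_nonempty ι with hι | ⟨⟨j₀⟩⟩
  · simp
  rcases eq_or_ne c 0 with rfl | hc
  · simp
  have hAtop : A ≠ ⊤ := fun h => not_top_lt (ENNReal.mul_top hc ▸ h ▸ hlt j₀)
  have hA0 : A ≠ 0 := fun h => by
    have hF0 : ∑ R ∈ F j₀, α R = 0 :=
      Finset.sum_eq_zero fun R hR =>
        le_zero_iff.mp (h ▸ hα.apply_le ((hF j₀ R hR).1.trans hQ))
    simpa [h, hF0] using hlt j₀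
  -- `u j R` is the part of `t j` charged to the cube `R`
  let u : ι → DyadicCube d → Set (Fin d → ℝ) := fun j R =>
    if R ∈ F j then (t j).toSet else ∅
  let inQ : Set (DyadicCube d) := {R | R.In Q}
  have hu : ∀ R, ∑' j, volume (u j R) ≤ inQ.indicator vol R := by
    intro R
    by_cases hRQ : R.In Q
    · rw [indicator_of_mem (show R ∈ inQ from hRQ), ← measure_iUnion]
      · exact measure_mono (iUnion_subset fun j => by
          dsimp only [u]; split_ifs with h; exacts [(hF j R h).2, empty_subset _])
      · exact fun i j hij => (hdisj hij).mono (by dsimp only [u]; split_ifs <;> simp)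
          (by dsimp only [u]; split_ifs <;> simp)
      · exact fun j => by dsimp only [u]; split_ifs; exacts [measurableSet_toSet _, .empty]
    · rw [indicator_of_notMem (show R ∉ inQ from hRQ)]
      refine le_of_eq (ENNReal.tsum_eq_zero.mpr fun j => ?_)
      simp only [u, ite_eq_right_iff.mpr fun h => absurd (hF j R h).1 hRQ, measure_empty]
  refine (ENNReal.mul_le_mul_iff_right hA0 hAtop).mp ?_
  calc A * (c * ∑' j, (t j).vol) = ∑' j, c * A * (t j).vol := by
        rw [ENNReal.tsum_mul_left]; ring
    _ ≤ ∑' j, ∑ R ∈ F j, α R * (t j).vol :=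
        ENNReal.tsum_le_tsum fun j => by rw [← Finset.sum_mul]; gcongr; exact (hlt j).le
    _ = ∑' j, ∑' R, α R * volume (u j R) := by
        refine tsum_congr fun j => (tsum_eq_sum fun R hR => ?_).trans
          (Finset.sum_congr rfl fun R hR => ?_) |>.symm
        · simp [u, hR]
        · simp [u, hR, vol]
    _ = ∑' R, α R * ∑' j, volume (u j R) := by
        rw [ENNReal.tsum_comm]; exact tsum_congr fun R => ENNReal.tsum_mul_left
    _ ≤ ∑' R, inQ.indicator (fun R => α R * R.vol) R :=
        ENNReal.tsum_le_tsum fun R => by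
          rw [indicator_mul_right]; gcongr; exact hu R
    _ = ∑' R : {R : DyadicCube d // R.In Q}, α R * R.1.vol := (tsum_subtype inQ _).symm
    _ ≤ A * Q.vol := hα Q hQ

end Carleson

section Stopping

variable (P₀ : DyadicCube d) (α : DyadicCube d → ℝ≥0∞) (A : ℝ≥0∞) (m : ℕ) {k : ℕ}
  (f : Fin k → (Fin d → ℝ) → ℝ≥0∞)

-- The thresholds `4k` and `4A` make the stopping children of a cube fill at most half of it.
def StopCond (x : Fin d → ℝ) (r j : ℕ) : Prop :=
  (∃ i, 4 * (k : ℝ≥0∞) * (sliceCube P₀ m x r).avg (f i) < (sliceCube P₀ m x j).avg (f i)) ∨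
    4 * A < ∑ l ∈ Finset.Ioc r j, α (sliceCube P₀ m x l)

open Classical in
/-- The slice of the last stopping cube above the `j`-th slice cube through `x`. -/
def stopSlice (x : Fin d → ℝ) : ℕ → ℕ
  | 0 => 0
  | j + 1 => if StopCond P₀ α A m f x (stopSlice x j) (j + 1) then j + 1 else stopSlice x j

variable {P₀ α A m f} {x y : Fin d → ℝ} {i j j' r : ℕ}

lemma stopSlice_le (x : Fin d → ℝ) (j : ℕ) : stopSlice P₀ α A m f x j ≤ j := by
  induction j with
  | zero => rfl
  | succ j ih => rw [stopSlice]; split_ifs <;> omega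

lemma stopSlice_mono : Monotone (stopSlice P₀ α A m f x) :=
  monotone_nat_of_le_succ fun j => by
    rw [stopSlice]
    split_ifs
    · exact (stopSlice_le x j).trans j.le_succ
    · rfl

lemma stopSlice_stopSlice :
    stopSlice P₀ α A m f x (stopSlice P₀ α A m f x j) = stopSlice P₀ α A m f x j := by
  induction j with
  | zero => rfl
  | succ j ih =>
    rw [stopSlice]
    split_ifs with h
    · rw [stopSlice, if_pos h]
    · exact ih

lemma stopSlice_succ_of_ne (h : stopSlice P₀ α A m f x (j + 1) ≠ stopSlice P₀ α A m f x j) :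
    stopSlice P₀ α A m f x (j + 1) = j + 1 := by
  rw [stopSlice] at h ⊢
  split_ifs at h ⊢
  · rfl
  · exact absurd rfl h

lemma stopCond_of_stopSlice_succ (h : stopSlice P₀ α A m f x (j + 1) = j + 1) :
    StopCond P₀ α A m f x (stopSlice P₀ α A m f x j) (j + 1) := by
  by_contra hc
  rw [stopSlice, if_neg hc] at h
  exact absurd h ((stopSlice_le x j).trans_lt j.lt_succ_self).ne

lemma not_stopCond_of_stopSlice_lt (h : stopSlice P₀ α A m f x j < j) :
    ¬ StopCond P₀ α A m f x (stopSlice P₀ α A m f x j) j := by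
  obtain ⟨j, rfl⟩ := Nat.exists_eq_add_one.mpr (by omega : 0 < j)
  rw [stopSlice] at h ⊢
  split_ifs at h ⊢ with hc
  · omega
  · exact hc

lemma stopCond_congr (hy : y ∈ (sliceCube P₀ m x j').toSet) (hr : r ≤ j) (hj : j ≤ j') :
    StopCond P₀ α A m f y r j ↔ StopCond P₀ α A m f x r j := by
  have hl : ∀ l ∈ Finset.Ioc r j, α (sliceCube P₀ m y l) = α (sliceCube P₀ m x l) :=
    fun l hl => by rw [sliceCube_eq_of_mem hy ((Finset.mem_Ioc.mp hl).2.trans hj)]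
  rw [StopCond, StopCond, sliceCube_eq_of_mem hy (hr.trans hj), sliceCube_eq_of_mem hy hj,
    Finset.sum_congr rfl hl]

lemma stopSlice_congr (hy : y ∈ (sliceCube P₀ m x j).toSet) (h : i ≤ j) :
    stopSlice P₀ α A m f y i = stopSlice P₀ α A m f x i := by
  induction i with
  | zero => rfl
  | succ i ih =>
    rw [stopSlice, stopSlice, ih (by omega),
      stopCond_congr hy ((stopSlice_le x i).trans i.le_succ) h]

end Stopping

section StoppingCubes

variable (P₀ : DyadicCube d) (α : DyadicCube d → ℝ≥0∞) (A : ℝ≥0∞) (m : ℕ) {k : ℕ}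
  (f : Fin k → (Fin d → ℝ) → ℝ≥0∞)

def stoppingCubes : Set (DyadicCube d) :=
  {Q | ∃ x ∈ P₀.toSet, ∃ j, stopSlice P₀ α A m f x j = j ∧ sliceCube P₀ m x j = Q}

/-- The sets `E(Q)` witnessing sparseness. -/
def sparseSet (Q : DyadicCube d) : Set (Fin d → ℝ) :=
  Q.toSet \ ⋃ R ∈ stoppingCubes P₀ α A m f, ⋃ (_ : Q.gen < R.gen), R.toSet

/-- The maximal stopping cubes strictly below `Q`. -/
def stoppingChildren (Q : DyadicCube d) : Set (DyadicCube d) :=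
  {C | ∃ y r j, sliceCube P₀ m y r = Q ∧ r ≤ j ∧ stopSlice P₀ α A m f y j = r ∧
    stopSlice P₀ α A m f y (j + 1) = j + 1 ∧ sliceCube P₀ m y (j + 1) = C}

variable {P₀ α A m f} {Q R C : DyadicCube d} {x y : Fin d → ℝ} {j : ℕ}

lemma in_of_mem_stoppingCubes (hQ : Q ∈ stoppingCubes P₀ α A m f) : Q.In P₀ := by
  obtain ⟨x, hx, j, -, rfl⟩ := hQ
  exact sliceCube_in hx

lemma sliceCube_mem_stoppingCubes (hx : x ∈ P₀.toSet) (h : stopSlice P₀ α A m f x j = j) :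
    sliceCube P₀ m x j ∈ stoppingCubes P₀ α A m f :=
  ⟨x, hx, j, h, rfl⟩

lemma exists_eq_sliceCube_of_mem_stoppingCubes (hQ : Q ∈ stoppingCubes P₀ α A m f)
    (hy : y ∈ Q.toSet) : ∃ j, sliceCube P₀ m y j = Q ∧ stopSlice P₀ α A m f y j = j := by
  obtain ⟨x, -, j, hj, rfl⟩ := hQ
  exact ⟨j, sliceCube_eq_of_mem hy le_rfl, (stopSlice_congr hy le_rfl).trans hj⟩

lemma measurableSet_sparseSet (Q : DyadicCube d) :
    MeasurableSet (sparseSet P₀ α A m f Q) :=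
  Q.measurableSet_toSet.diff <| .biUnion (to_countable _) fun R _ =>
    .iUnion fun _ => R.measurableSet_toSet

lemma sparseSet_subset (Q : DyadicCube d) : sparseSet P₀ α A m f Q ⊆ Q.toSet :=
  sdiff_subset

lemma disjoint_sparseSet_of_gen_lt (hR : R ∈ stoppingCubes P₀ α A m f) (h : Q.gen < R.gen) :
    Disjoint (sparseSet P₀ α A m f Q) R.toSet :=
  disjoint_left.mpr fun _ hy hyR => hy.2 (mem_biUnion hR (mem_iUnion_of_mem h hyR))

lemma pairwiseDisjoint_sparseSet :
    (stoppingCubes P₀ α A m f).PairwiseDisjoint (sparseSet P₀ α A m f) := by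
  intro Q hQ R hR hQR
  rcases lt_trichotomy Q.gen R.gen with h | h | h
  · exact (disjoint_sparseSet_of_gen_lt hR h).mono_right (sparseSet_subset R)
  · refine .mono (sparseSet_subset Q) (sparseSet_subset R) (disjoint_left.mpr fun y hy hy' => ?_)
    exact hQR (eq_of_gen_eq h hy hy')
  · exact (disjoint_sparseSet_of_gen_lt hQ h).symm.mono_left (sparseSet_subset Q)

lemma stoppingChildren_subset (hC : C ∈ stoppingChildren P₀ α A m f Q) :
    C.toSet ⊆ Q.toSet := by
  obtain ⟨y, r, j, rfl, hrj, -, -, rfl⟩ := hC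
  exact sliceCube_subset (by omega)

lemma pairwiseDisjoint_stoppingChildren (hm : 0 < m) (Q : DyadicCube d) :
    (stoppingChildren P₀ α A m f Q).PairwiseDisjoint toSet := by
  rintro _ ⟨y, r, j, rfl, hrj, hj, hj₁, rfl⟩ _ ⟨y', r', j', hQ, hrj', hj', hj₁', rfl⟩ hne
  refine disjoint_left.mpr fun z hz hz' => hne ?_
  -- transport everything to the chain through the common point `z`
  have hr : r' = r := sliceCube_injective hm <| by
    rw [sliceCube_eq_of_mem hz' (by omega : r' ≤ j' + 1), hQ, sliceCube_eq_of_mem hz (by omega)]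
  subst hr
  set s := stopSlice P₀ α A m f z
  have hs : Monotone s := stopSlice_mono
  have hzj : s j = r' := (stopSlice_congr hz (by omega)).trans hj
  have hzj' : s j' = r' := (stopSlice_congr hz' (by omega)).trans hj'
  have hzj₁ : s (j + 1) = j + 1 := (stopSlice_congr hz le_rfl).trans hj₁
  have hzj₁' : s (j' + 1) = j' + 1 := (stopSlice_congr hz' le_rfl).trans hj₁'
  have hjj' : j = j' := by
    by_contra hne
    rcases Nat.lt_or_gt_of_ne hne with h | h
    · have := hs (show j + 1 ≤ j' from h)
      omega
    · have := hs (show j' + 1 ≤ j from h)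
      omega
  rw [← sliceCube_eq_of_mem hz le_rfl, ← sliceCube_eq_of_mem hz' le_rfl, hjj']

lemma stopCond_of_mem_stoppingChildren (hm : 0 < m)
    (hC : C ∈ stoppingChildren P₀ α A m f Q) :
    (∃ i, 4 * (k : ℝ≥0∞) * Q.avg (f i) < C.avg (f i)) ∨
      ∃ F : Finset (DyadicCube d), (∀ R ∈ F, R.In Q ∧ C.toSet ⊆ R.toSet) ∧
        4 * A < ∑ R ∈ F, α R := by
  classical
  obtain ⟨y, r, j, rfl, hrj, hj, hj₁, rfl⟩ := hC
  have hstop := stopCond_of_stopSlice_succ hj₁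
  rw [hj] at hstop
  refine hstop.imp id fun hmass => ⟨(Finset.Ioc r (j + 1)).image (sliceCube P₀ m y), ?_, ?_⟩
  · simp only [Finset.mem_image, Finset.mem_Ioc]
    rintro _ ⟨l, ⟨hrl, hl⟩, rfl⟩
    exact ⟨sliceCube_in_sliceCube hrl.le, sliceCube_subset hl⟩
  · rwa [Finset.sum_image fun _ _ _ _ h => sliceCube_injective hm h]

lemma inter_deeper_subset_stoppingChildren (hQ : Q ∈ stoppingCubes P₀ α A m f) :
    Q.toSet ∩ (⋃ R ∈ stoppingCubes P₀ α A m f, ⋃ (_ : Q.gen < R.gen), R.toSet) ⊆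
      ⋃ C ∈ stoppingChildren P₀ α A m f Q, C.toSet := by
  rintro y ⟨hyQ, hyR⟩
  simp only [mem_iUnion] at hyR
  obtain ⟨R, hR, hgen, hyR⟩ := hyR
  obtain ⟨r, rfl, hr⟩ := exists_eq_sliceCube_of_mem_stoppingCubes hQ hyQ
  obtain ⟨j, rfl, hj⟩ := exists_eq_sliceCube_of_mem_stoppingCubes hR hyR
  have hrj : r < j := by
    simp only [sliceCube_gen, add_lt_add_iff_left] at hgen
    exact_mod_cast lt_of_mul_lt_mul_right hgen (Int.natCast_nonneg m)
  -- the first stop after slice `r` on the chain through `y` is a child containing `y`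
  suffices ∀ n, stopSlice P₀ α A m f y (r + n) ≠ r →
      y ∈ ⋃ C ∈ stoppingChildren P₀ α A m f (sliceCube P₀ m y r), C.toSet from
    this (j - r) (by rw [Nat.add_sub_cancel' hrj.le, hj]; omega)
  intro n
  induction n with
  | zero => exact fun h => absurd hr h
  | succ n ih =>
    intro hn
    by_cases hstop : stopSlice P₀ α A m f y (r + n) = r
    · have hstop₁ : stopSlice P₀ α A m f y (r + n + 1) = r + n + 1 :=
        stopSlice_succ_of_ne (by rwa [hstop])
      exact mem_biUnion ⟨y, r, r + n, rfl, by omega, hstop, hstop₁, rfl⟩ mem_sliceCube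
    · exact ih hstop

end StoppingCubes

section Sparse

variable {P₀ Q : DyadicCube d} {α : DyadicCube d → ℝ≥0∞} {A : ℝ≥0∞} {m k : ℕ}
  {f : Fin k → (Fin d → ℝ) → ℝ≥0∞}

lemma volume_biUnion_stoppingChildren_le (hα : Carleson P₀ α A) (hm : 0 < m) (hk : 0 < k)
    (hQ : Q.In P₀) :
    volume (⋃ C ∈ stoppingChildren P₀ α A m f Q, C.toSet) ≤ Q.vol / 2 := by
  set ch := stoppingChildren P₀ α A m f Q
  have hdisj (p : DyadicCube d → Prop) :
      Pairwise (Function.onFun Disjoint fun C : {C // C ∈ ch ∧ p C} => C.1.toSet) :=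
    fun C C' h =>
      pairwiseDisjoint_stoppingChildren hm Q C.2.1 C'.2.1 (Subtype.coe_injective.ne h)
  let U (i : Fin k) :=
    ⋃ C : {C // C ∈ ch ∧ 4 * (k : ℝ≥0∞) * Q.avg (f i) < C.avg (f i)}, C.1.toSet
  let V := ⋃ C : {C // C ∈ ch ∧ ∃ F : Finset (DyadicCube d),
    (∀ R ∈ F, R.In Q ∧ C.toSet ⊆ R.toSet) ∧ 4 * A < ∑ R ∈ F, α R}, C.1.toSet
  have hcover : ⋃ C ∈ ch, C.toSet ⊆ (⋃ i, U i) ∪ V := by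
    simp only [iUnion_subset_iff]
    intro C hC y hy
    rcases stopCond_of_mem_stoppingChildren hm hC with ⟨i, hi⟩ | hmass
    · exact Or.inl (mem_iUnion.mpr ⟨i, mem_iUnion.mpr ⟨⟨C, hC, hi⟩, hy⟩⟩)
    · exact Or.inr (mem_iUnion.mpr ⟨⟨C, hC, hmass⟩, hy⟩)
  have hU (i : Fin k) : volume (U i) ≤ Q.vol / (4 * k) := by
    rw [ENNReal.le_div_iff_mul_le (Or.inl (by positivity))
      (Or.inl (ENNReal.mul_ne_top ofNat_ne_top (natCast_ne_top k))), mul_comm]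
    refine (mul_le_mul_right (measure_iUnion_le _) _).trans ?_
    exact mul_tsum_measure_le_of_mul_avg_lt Q.vol_ne_top (fun C => measurableSet_toSet _)
      (hdisj _) (fun C => stoppingChildren_subset C.2.1) fun C => C.2.2
  have hV : volume V ≤ Q.vol / 4 := by
    rw [ENNReal.le_div_iff_mul_le (Or.inl (by positivity)) (Or.inl ofNat_ne_top), mul_comm]
    exact (mul_le_mul_right (measure_iUnion_le _) _).trans
      (hα.mul_tsum_vol_le hQ (hdisj _) fun C => C.2.2)
  calc volume (⋃ C ∈ ch, C.toSet) ≤ volume (⋃ i, U i) + volume V :=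
        (measure_mono hcover).trans (measure_union_le _ _)
    _ ≤ ∑ i, volume (U i) + volume V := by gcongr; exact measure_iUnion_fintype_le _ _
    _ ≤ ∑ _i : Fin k, Q.vol / (4 * k) + Q.vol / 4 := by gcongr with i; exact hU i
    _ = Q.vol / 2 := by
        rw [Finset.sum_const, Finset.card_univ, Fintype.card_fin, nsmul_eq_mul, ← mul_div_assoc,
          mul_comm (4 : ℝ≥0∞), ENNReal.mul_div_mul_left _ _ (by positivity) (natCast_ne_top k),
          ENNReal.div_add_div_same, ← two_mul, show (4 : ℝ≥0∞) = 2 * 2 by norm_num,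
          ENNReal.mul_div_mul_left _ _ two_ne_zero ofNat_ne_top]

lemma sparse_stoppingCubes (hα : Carleson P₀ α A) (hm : 0 < m) (hk : 0 < k) :
    Sparse (1 / 2) (stoppingCubes P₀ α A m f) := by
  refine ⟨sparseSet P₀ α A m f, fun Q hQ => ⟨measurableSet_sparseSet Q, sparseSet_subset Q, ?_⟩,
    pairwiseDisjoint_sparseSet⟩
  have hdeep := (measure_mono (inter_deeper_subset_stoppingChildren hQ)).trans
    (volume_biUnion_stoppingChildren_le hα hm hk (in_of_mem_stoppingCubes hQ))
  calc 1 / 2 * Q.vol = Q.vol - Q.vol / 2 := by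
        rw [ENNReal.sub_half Q.vol_ne_top, one_div, ENNReal.div_eq_inv_mul]
    _ ≤ Q.vol - volume (Q.toSet ∩ _) := tsub_le_tsub_left hdeep _
    _ ≤ volume (Q.toSet \ (Q.toSet ∩ _)) := le_measure_sdiff
    _ = volume (sparseSet P₀ α A m f Q) := by rw [sdiff_self_inter]; rfl

end Sparse

section Pointwise

variable {P₀ : DyadicCube d} {α : DyadicCube d → ℝ≥0∞} {A : ℝ≥0∞} {m k : ℕ}
  {f : Fin k → (Fin d → ℝ) → ℝ≥0∞} {x : Fin d → ℝ}

lemma slicedShift_eq_tsum (hm : 0 < m) (hx : x ∈ P₀.toSet) :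
    slicedShift P₀ α m f x =
      ∑' j, α (sliceCube P₀ m x (j + 1)) * ∏ i, (sliceCube P₀ m x j).avg (f i) := by
  let g : ℕ → {Q : DyadicCube d // Q.In P₀ ∧ ∃ j : ℕ, 1 ≤ j ∧ Q.gen = P₀.gen + j * m} :=
    fun j => ⟨sliceCube P₀ m x (j + 1), sliceCube_in hx, j + 1, by omega, rfl⟩
  have hg : Function.Injective g := fun i j h =>
    Nat.succ_injective (sliceCube_injective hm (congrArg Subtype.val h))
  rw [slicedShift, ← hg.tsum_eq]
  · refine tsum_congr fun j => ?_
    simp [g, ancestor_sliceCube, indicator_of_mem mem_sliceCube]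
  · intro Q hQ
    have hxQ : x ∈ Q.1.toSet := by
      by_contra h
      exact hQ (by simp [indicator_of_notMem h])
    obtain ⟨j, hj, hgen⟩ := Q.2.2
    obtain ⟨j, rfl⟩ := Nat.exists_eq_add_one.mpr hj
    exact ⟨j, Subtype.ext (eq_sliceCube hgen hxQ).symm⟩

lemma prod_avg_sliceCube_le (hk : 0 < k) (j : ℕ) :
    ∏ i, (sliceCube P₀ m x j).avg (f i) ≤
      (4 * k) ^ k * ∏ i, (sliceCube P₀ m x (stopSlice P₀ α A m f x j)).avg (f i) := by
  calc ∏ i, (sliceCube P₀ m x j).avg (f i)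
      ≤ ∏ i, 4 * k * (sliceCube P₀ m x (stopSlice P₀ α A m f x j)).avg (f i) := by
        refine Finset.prod_le_prod' fun i _ => ?_
        rcases eq_or_ne (stopSlice P₀ α A m f x j) j with h | h
        · rw [h]
          exact le_mul_of_one_le_left' (by norm_cast; omega)
        · have hgo := not_stopCond_of_stopSlice_lt ((stopSlice_le x j).lt_of_ne h)
          simp only [StopCond, not_or, not_exists, not_lt] at hgo
          exact hgo.1 i
    _ = _ := by
        rw [Finset.prod_mul_distrib, Finset.prod_const, Finset.card_univ, Fintype.card_fin]

lemma sum_Ioc_stopSlice_le (x : Fin d → ℝ) (j : ℕ) :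
    ∑ l ∈ Finset.Ioc (stopSlice P₀ α A m f x j) j, α (sliceCube P₀ m x l) ≤ 4 * A := by
  rcases eq_or_ne (stopSlice P₀ α A m f x j) j with h | h
  · simp [h]
  · have hgo := not_stopCond_of_stopSlice_lt ((stopSlice_le x j).lt_of_ne h)
    simp only [StopCond, not_or, not_lt] at hgo
    exact hgo.2

lemma tsum_stopSlice_fiber_le (hα : Carleson P₀ α A) (hx : x ∈ P₀.toSet) (r : ℕ) :
    ∑' j : stopSlice P₀ α A m f x ⁻¹' {r}, α (sliceCube P₀ m x (j + 1)) ≤ 5 * A := by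
  classical
  rw [tsum_subtype (stopSlice P₀ α A m f x ⁻¹' {r}) fun j => α (sliceCube P₀ m x (j + 1))]
  refine ENNReal.tsum_le_of_sum_range_le fun n => ?_
  simp only [indicator_apply, mem_preimage, mem_singleton_iff, ← Finset.sum_filter]
  set G := (Finset.range n).filter (stopSlice P₀ α A m f x · = r)
  rcases G.eq_empty_or_nonempty with hG | hG
  · simp [hG]
  set b := G.max' hG
  have hb : stopSlice P₀ α A m f x b = r := (Finset.mem_filter.mp (G.max'_mem hG)).2
  have hrb : r ≤ b := hb ▸ stopSlice_le x b
  -- the slices with stopping slice `r` lie in `[r, b]`, and there is no stop at `b`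
  calc ∑ j ∈ G, α (sliceCube P₀ m x (j + 1))
        = ∑ l ∈ G.image (· + 1), α (sliceCube P₀ m x l) :=
          by rw [Finset.sum_image fun _ _ _ _ h => Nat.add_right_cancel h]
    _ ≤ ∑ l ∈ Finset.Ioc r (b + 1), α (sliceCube P₀ m x l) := by
        refine Finset.sum_le_sum_of_subset fun l hl => ?_
        obtain ⟨j, hj, rfl⟩ := Finset.mem_image.mp hl
        have hjr : stopSlice P₀ α A m f x j = r := (Finset.mem_filter.mp hj).2
        exact Finset.mem_Ioc.mpr ⟨Nat.lt_succ_of_le (hjr ▸ stopSlice_le x j),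
          Nat.succ_le_succ (G.le_max' j hj)⟩
    _ = ∑ l ∈ Finset.Ioc r b, α (sliceCube P₀ m x l) + α (sliceCube P₀ m x (b + 1)) :=
        Finset.sum_Ioc_succ_top hrb _
    _ ≤ 4 * A + A :=
        add_le_add (hb ▸ sum_Ioc_stopSlice_le x b) (hα.apply_le (sliceCube_in hx))
    _ = 5 * A := by ring

lemma tsum_mul_prod_avg_stop_le (hα : Carleson P₀ α A) (hm : 0 < m) (hx : x ∈ P₀.toSet) :
    ∑' j, α (sliceCube P₀ m x (j + 1)) *
        ∏ i, (sliceCube P₀ m x (stopSlice P₀ α A m f x j)).avg (f i) ≤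
      5 * A * sparseOp (stoppingCubes P₀ α A m f) f x := by
  set s := stopSlice P₀ α A m f x
  set G : DyadicCube d → ℝ≥0∞ := fun Q => ∏ i, Q.avg (f i)
  -- group the slices by their stopping slice `r`, which is a fixed point of `s`
  have hfix : (Function.support fun r =>
      (∑' j : s ⁻¹' {r}, α (sliceCube P₀ m x (j + 1))) * G (sliceCube P₀ m x r)) ⊆
        {r | s r = r} := by
    intro r hr
    by_contra hne
    have : IsEmpty (s ⁻¹' {r}) := ⟨fun j => hne ((show s j = r from j.2) ▸ stopSlice_stopSlice)⟩
    simp at hr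
  let φ : {r | s r = r} → stoppingCubes P₀ α A m f :=
    fun r => ⟨sliceCube P₀ m x r, sliceCube_mem_stoppingCubes hx r.2⟩
  have hφ : Function.Injective φ := fun r r' h =>
    Subtype.ext (sliceCube_injective hm (congrArg Subtype.val h))
  calc ∑' j, α (sliceCube P₀ m x (j + 1)) * G (sliceCube P₀ m x (s j))
      = ∑' r, (∑' j : s ⁻¹' {r}, α (sliceCube P₀ m x (j + 1))) * G (sliceCube P₀ m x r) := by
        rw [← ENNReal.tsum_fiberwise _ s]
        refine tsum_congr fun r => ?_
        rw [← ENNReal.tsum_mul_right]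
        exact tsum_congr fun j => by rw [show s j = r from j.2]
    _ = ∑' r : {r | s r = r},
          (∑' j : s ⁻¹' {r.1}, α (sliceCube P₀ m x (j + 1))) * G (sliceCube P₀ m x r) :=
        (tsum_subtype_eq_of_support_subset hfix).symm
    _ ≤ ∑' r : {r | s r = r}, 5 * A * G (sliceCube P₀ m x r) :=
        ENNReal.tsum_le_tsum fun r => by gcongr; exact tsum_stopSlice_fiber_le hα hx r
    _ = 5 * A * ∑' r,
          (fun Q : stoppingCubes P₀ α A m f => G Q * Q.1.toSet.indicator 1 x) (φ r) := by
        simp [φ, ENNReal.tsum_mul_left, indicator_of_mem mem_sliceCube]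
    _ ≤ 5 * A * sparseOp (stoppingCubes P₀ α A m f) f x := by
        gcongr
        exact ENNReal.tsum_comp_le_tsum_of_injective hφ _

lemma slicedShift_le_sparseOp (hα : Carleson P₀ α A) (hm : 0 < m) (hk : 0 < k)
    (hx : x ∈ P₀.toSet) :
    slicedShift P₀ α m f x ≤
      (4 * k) ^ k * (5 * A) * sparseOp (stoppingCubes P₀ α A m f) f x := by
  calc slicedShift P₀ α m f x
      = ∑' j, α (sliceCube P₀ m x (j + 1)) * ∏ i, (sliceCube P₀ m x j).avg (f i) :=
        slicedShift_eq_tsum hm hx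
    _ ≤ ∑' j, (4 * k) ^ k * (α (sliceCube P₀ m x (j + 1)) *
          ∏ i, (sliceCube P₀ m x (stopSlice P₀ α A m f x j)).avg (f i)) :=
        ENNReal.tsum_le_tsum fun j => by
          rw [mul_left_comm]; gcongr; exact prod_avg_sliceCube_le hk j
    _ ≤ (4 * k) ^ k * (5 * A * sparseOp (stoppingCubes P₀ α A m f) f x) := by
        rw [ENNReal.tsum_mul_left]; gcongr; exact tsum_mul_prod_avg_stop_le hα hm hx
    _ = _ := by ring

end Pointwise

lemma sparse_singleton (P : DyadicCube d) : Sparse (1 / 2) {P} :=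
  ⟨toSet, fun Q _ => ⟨Q.measurableSet_toSet, subset_rfl, mul_le_of_le_one_left' (by norm_num)⟩,
    pairwise_singleton _ _⟩

lemma sparseOp_singleton {k : ℕ} (P : DyadicCube d) (f : Fin k → (Fin d → ℝ) → ℝ≥0∞)
    (x : Fin d → ℝ) : sparseOp {P} f x = (∏ i, P.avg (f i)) * P.toSet.indicator 1 x :=
  tsum_singleton P fun Q => (∏ i, Q.avg (f i)) * Q.toSet.indicator 1 x

lemma slicedShift_le_of_dim_eq_zero {P₀ : DyadicCube 0} {α : DyadicCube 0 → ℝ≥0∞} {A : ℝ≥0∞}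
    (hα : Carleson P₀ α A) (m : ℕ) {k : ℕ} (f : Fin k → (Fin 0 → ℝ) → ℝ≥0∞) (x : Fin 0 → ℝ) :
    slicedShift P₀ α m f x ≤ A * ∏ i, P₀.avg (f i) := by
  have huniv (Q : DyadicCube 0) : Q.toSet = univ := eq_univ_of_forall fun _ i => i.elim0
  have hvol (Q : DyadicCube 0) : Q.vol = 1 := by simp [vol_eq]
  have havg (Q : DyadicCube 0) (g : (Fin 0 → ℝ) → ℝ≥0∞) : Q.avg g = P₀.avg g := by
    simp only [avg, huniv, hvol]
  calc slicedShift P₀ α m f x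
      = (∑' Q : {Q : DyadicCube 0 // Q.In P₀ ∧ ∃ j : ℕ, 1 ≤ j ∧ Q.gen = P₀.gen + j * m},
          α Q.1 * Q.1.vol) * ∏ i, P₀.avg (f i) := by
        simp [slicedShift, havg, huniv, hvol, ENNReal.tsum_mul_right]
    _ ≤ (∑' Q : {Q : DyadicCube 0 // Q.In P₀}, α Q.1 * Q.1.vol) * ∏ i, P₀.avg (f i) := by
        gcongr
        exact ENNReal.tsum_comp_le_tsum_of_injective
          (Subtype.impEmbedding _ _ fun _ h => h.1).injective fun Q => α Q.1 * Q.1.vol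
    _ ≤ A * ∏ i, P₀.avg (f i) := by
        gcongr
        simpa [hvol] using hα P₀ (In.refl P₀)

lemma five_mul_four_mul_pow_le {k : ℕ} (hd : 0 < d) (hk : 0 < k) :
    5 * (4 * k) ^ k ≤ 2 ^ (2 + k * (6 + d * (2 * k - 1))) := by
  have hexp : 3 + k * (2 * k) ≤ 2 + k * (6 + d * (2 * k - 1)) := by
    obtain ⟨t, rfl⟩ := Nat.exists_eq_add_one.mpr hk
    rw [show 2 * (t + 1) - 1 = 2 * t + 1 by omega]
    nlinarith [Nat.le_mul_of_pos_left (2 * t + 1) hd]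
  calc 5 * (4 * k) ^ k ≤ 2 ^ 3 * ((2 ^ 2) ^ k) ^ k := by
        gcongr
        · norm_num
        · exact Nat.mul_le_pow (by norm_num) k
    _ = 2 ^ (3 + k * (2 * k)) := by rw [← pow_mul, ← pow_mul, pow_add]; ring_nf
    _ ≤ 2 ^ (2 + k * (6 + d * (2 * k - 1))) := Nat.pow_le_pow_right two_pos hexp

end DyadicCube

theorem sliced_sparse_domination_general {d k : ℕ} (hk : 0 < k) (m : ℕ) (hm : 1 ≤ m)
    (P₀ : DyadicCube d) (α : DyadicCube d → ℝ≥0∞) (A : ℝ≥0∞) (hα : Carleson P₀ α A)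
    (f : Fin k → (Fin d → ℝ) → ℝ≥0∞) :
    ∃ S : Set (DyadicCube d), (∀ Q ∈ S, Q.In P₀) ∧ Sparse (1 / 2) S ∧
      ∀ x ∈ P₀.toSet,
        slicedShift P₀ α m f x ≤
          2 ^ (2 + k * (6 + d * (2 * k - 1))) * A * sparseOp S f x := by
  rcases Nat.eq_zero_or_pos d with rfl | hd
  -- in dimension zero all cubes are the whole space, and `2 ^ (2 + 6k)` may be below `5 (4k)^k`
  · refine ⟨{P₀}, fun Q hQ => hQ ▸ In.refl P₀, sparse_singleton P₀, fun x hx => ?_⟩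
    rw [sparseOp_singleton, indicator_of_mem hx, Pi.one_apply, mul_one, mul_assoc]
    exact (slicedShift_le_of_dim_eq_zero hα m f x).trans
      (le_mul_of_one_le_left' (one_le_pow₀ one_le_two))
  · refine ⟨stoppingCubes P₀ α A m f, fun Q => in_of_mem_stoppingCubes,
      sparse_stoppingCubes hα hm hk, fun x hx => (slicedShift_le_sparseOp hα hm hk hx).trans ?_⟩
    calc _ = ((5 * (4 * k) ^ k : ℕ) : ℝ≥0∞) * A * sparseOp (stoppingCubes P₀ α A m f) f x := by
          push_cast; ring
      _ ≤ _ := by gcongr; exact_mod_cast five_mul_four_mul_pow_le hd hk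

/-- pointwise sparse domination of the sliced shift: for `m ≥ 1` and
nonnegative integrable `f₁,…,f_k` there is a `(1/2)`-sparse `𝒮 ⊆ 𝒟(P₀)` with
`𝒜^{m;0}_{P₀,α} f⃗(x) ≤ C₁ ‖α‖_{Car(P₀)} Σ_{Q∈𝒮} (∏⟨f_i⟩_Q) 1_Q(x)` on `P₀`,
with `C₁ = 2^{2+k(6+d(2k−1))}` independent of `m`. -/
theorem sliced_sparse_domination {d k : ℕ} (hk : 0 < k) (m : ℕ) (hm : 1 ≤ m)
    (P₀ : DyadicCube d) (α : DyadicCube d → ℝ≥0∞) (A : ℝ≥0∞) (hα : Carleson P₀ α A)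
    (f : Fin k → (Fin d → ℝ) → ℝ≥0∞) (hf : ∀ i, Measurable (f i))
    (hfint : ∀ i, ∫⁻ x in P₀.toSet, f i x < ⊤) :
    ∃ S : Set (DyadicCube d), (∀ Q ∈ S, Q.In P₀) ∧ Sparse (1 / 2) S ∧
      ∀ x ∈ P₀.toSet,
        slicedShift P₀ α m f x ≤
          2 ^ (2 + k * (6 + d * (2 * k - 1))) * A * sparseOp S f x :=
  sliced_sparse_domination_general hk m hm P₀ α A hα f
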